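/- For all smooth maps γ, X : S¹ → 𝓜 one has the estimate |∫₀¹ ⟨γ'(s), X(s)⟩ ds| ≤ 2π · ‖γ‖_{1/2} · ‖X‖_{1/2}. Consequently the canonical 1-form θ_γ(X) = ∫_{S¹} ⟨γ'(s), X(s)⟩ ds, defined a priori for smooth loops, extends continuously to the H^{1/2} × H^{1/2} setting via the duality pairing H^{−1/2} × H^{1/2} → ℝ. -/

import Mathlib

open MeasureTheory
open scoped ENNReal NNReal

noncomputable section

instance : Fact ((0 : ℝ) < 1) := ⟨one_pos⟩

/-- The circle `S¹ = ℝ/ℤ`. -/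
abbrev Circle1 : Type := AddCircle (1 : ℝ)

/-- The algebra `𝓜` of `d×d` complex matrices. -/
abbrev Mat (d : ℕ) : Type := Matrix (Fin d) (Fin d) ℂ

/-- A matrix-valued loop is smooth if each entry has a `C^∞` lift `ℝ → ℂ`. -/
def MatSmoothLoop {d : ℕ} (f : Circle1 → Mat d) : Prop :=
  ∀ i j, ContDiff ℝ (⊤ : ℕ∞) fun x : ℝ => f (x : Circle1) i j

/-- The real Frobenius inner product `⟨A,B⟩ = Re tr(AB*) = Σ_{i,j} Re (A_{ij} conj B_{ij})`. -/
def matRealInner {d : ℕ} (A B : Mat d) : ℝ :=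
  ∑ i, ∑ j, (A i j * (starRingEnd ℂ) (B i j)).re

/-- The entrywise derivative `γ'` of a matrix-valued loop, as a function of the lifted
variable `s ∈ ℝ`. -/
def matDeriv {d : ℕ} (γ : Circle1 → Mat d) (s : ℝ) : Mat d :=
  Matrix.of fun i j => deriv (fun x : ℝ => γ (x : Circle1) i j) s

/-- The squared Frobenius norm of the `n`-th Fourier coefficient of a matrix-valued loop,
computed entrywise: `‖f_n‖² = Σ_{i,j} ‖(f_{ij})_n‖²`. -/
def matCoeffNormSq {d : ℕ} (f : Circle1 → Mat d) (n : ℤ) : ℝ :=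
  ∑ i, ∑ j, ‖fourierCoeff (fun x : Circle1 => f x i j) n‖ ^ 2

/-- The squared Sobolev norm `‖f‖_s² = Σ_n (1+|n|)^{2s} ‖f_n‖²`, valued in `ℝ≥0∞`. -/
def matSobolevNormSq {d : ℕ} (s : ℝ) (f : Circle1 → Mat d) : ℝ≥0∞ :=
  ∑' n : ℤ, ENNReal.ofReal ((1 + |(n : ℝ)|) ^ (2 * s) * matCoeffNormSq f n)

end

namespace CanonAux

open Complex Real intervalIntegral AddCircle
open scoped ComplexConjugate InnerProductSpace

noncomputable section

lemma periodic_lift (f : Circle1 → ℂ) : Function.Periodic (fun x : ℝ => f x) 1 := by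
  intro x; simp only; congr 1; exact AddCircle.coe_add_period 1 x

lemma periodic_deriv {F : ℝ → ℂ} (h : Function.Periodic F 1) :
    Function.Periodic (deriv F) 1 := by
  intro x
  have h1 : (fun y : ℝ => F (y + 1)) = F := funext fun y => h y
  rw [← deriv_comp_add_const, h1]

/-- The pushdown to the circle of the derivative of the lift of `f`. -/
def Df (f : Circle1 → ℂ) : Circle1 → ℂ := (periodic_deriv (periodic_lift f)).lift

lemma Df_coe (f : Circle1 → ℂ) (x : ℝ) :
    Df f (x : Circle1) = deriv (fun y : ℝ => f y) x := rfl

lemma continuous_Df (f : Circle1 → ℂ) (hf : ContDiff ℝ (⊤ : ℕ∞) fun x : ℝ => f x) :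
    Continuous (Df f) :=
  (hf.continuous_deriv (by simp)).quotient_liftOn' _

lemma continuous_lift_to_circle (f : Circle1 → ℂ) (hf : Continuous fun x : ℝ => f x) :
    Continuous f := by
  have h : f = (periodic_lift f).lift :=
    funext fun y => QuotientAddGroup.induction_on y fun x => rfl
  rw [h]
  exact hf.quotient_liftOn' _

lemma coeff_eq (f : Circle1 → ℂ) (n : ℤ) :
    fourierCoeff f n = ∫ x in (0:ℝ)..1, fourier (-n) (x : Circle1) • f x := by
  have := fourierCoeff_eq_intervalIntegral f n 0
  rw [zero_add] at this
  simpa using this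

lemma fourier_one_eq (n : ℤ) : fourier (-n) ((1:ℝ) : Circle1) = 1 := by
  have : ((1:ℝ) : Circle1) = ((0:ℝ) : Circle1) := by
    norm_cast
    simp [AddCircle.coe_period]
  rw [this]
  exact fourier_eval_zero (-n)

lemma fourierCoeff_Df (f : Circle1 → ℂ) (hf : ContDiff ℝ (⊤ : ℕ∞) fun x : ℝ => f x) (n : ℤ) :
    fourierCoeff (Df f) n = (2 * π * I * n) * fourierCoeff f n := by
  set F : ℝ → ℂ := fun x : ℝ => f x with hF
  have hder : ∀ x ∈ Set.uIcc (0:ℝ) 1, HasDerivAt F (deriv F x) x := fun x _ =>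
    (hf.differentiable (by simp)).differentiableAt.hasDerivAt
  have hu : ∀ x ∈ Set.uIcc (0:ℝ) 1,
      HasDerivAt (fun y : ℝ => fourier (-n) (y : Circle1))
        ((-2 * π * I * n) * fourier (-n) (x : Circle1)) x := by
    intro x _
    simpa using hasDerivAt_fourier_neg 1 n x
  have hu' : IntervalIntegrable (fun x : ℝ => (-2 * π * I * n) * fourier (-n) (x : Circle1))
      volume 0 1 :=
    (Continuous.intervalIntegrable (by continuity) _ _)
  have hF' : IntervalIntegrable (deriv F) volume 0 1 :=
    ((hf.continuous_deriv (by simp)).intervalIntegrable _ _)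
  have key := integral_mul_deriv_eq_deriv_mul hu hder hu' hF'
  have hF10 : F 1 = F 0 := by simpa [hF] using periodic_lift f 0
  have hu1 : fourier (-n) ((1:ℝ) : Circle1) = 1 := fourier_one_eq n
  have hu0 : fourier (-n) ((0:ℝ) : Circle1) = 1 := fourier_eval_zero (-n)
  have hcoefDf : fourierCoeff (Df f) n
      = ∫ x in (0:ℝ)..1, fourier (-n) (x : Circle1) * deriv F x := by
    rw [coeff_eq]; rfl
  have hcoef : fourierCoeff f n = ∫ x in (0:ℝ)..1, fourier (-n) (x : Circle1) * F x := by
    rw [coeff_eq]; rfl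
  rw [hcoefDf, key, hu1, hu0, hF10]
  have : (∫ x in (0:ℝ)..1, (-2 * π * I * n) * fourier (-n) (x : Circle1) * F x)
      = (-2 * π * I * n) * ∫ x in (0:ℝ)..1, fourier (-n) (x : Circle1) * F x := by
    rw [← intervalIntegral.integral_const_mul]
    congr 1; ext x; ring
  rw [this, ← hcoef]
  ring

lemma norm_coeff_Df (f : Circle1 → ℂ) (hf : ContDiff ℝ (⊤ : ℕ∞) fun x : ℝ => f x) (n : ℤ) :
    ‖fourierCoeff (Df f) n‖ = 2 * π * |(n : ℝ)| * ‖fourierCoeff f n‖ := by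
  rw [fourierCoeff_Df f hf n, norm_mul]
  congr 1
  simp only [norm_mul, Complex.norm_ofNat, Complex.norm_real, Real.norm_eq_abs,
    Complex.norm_I, Complex.norm_intCast]
  rw [_root_.abs_of_nonneg Real.pi_pos.le]
  push_cast
  ring

lemma hasSum_coeff_mul (u v : C(Circle1, ℂ)) :
    HasSum (fun n : ℤ => conj (fourierCoeff (⇑u) n) * fourierCoeff (⇑v) n)
      (∫ t : Circle1, conj (u t) * v t ∂haarAddCircle) := by
  set U := ContinuousMap.toLp (E := ℂ) 2 haarAddCircle ℂ u with hU
  set V := ContinuousMap.toLp (E := ℂ) 2 haarAddCircle ℂ v with hV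
  have h := fourierBasis.hasSum_inner_mul_inner U V
  have h1 : ∀ n : ℤ, ⟪U, fourierBasis n⟫_ℂ = conj (fourierCoeff (⇑u) n) := by
    intro n
    rw [← inner_conj_symm, ← fourierBasis.repr_apply_apply, fourierBasis_repr, fourierCoeff_toLp]
  have h2 : ∀ n : ℤ, ⟪fourierBasis n, V⟫_ℂ = fourierCoeff (⇑v) n := by
    intro n
    rw [← fourierBasis.repr_apply_apply, fourierBasis_repr, fourierCoeff_toLp]
  have h3 : ⟪U, V⟫_ℂ = ∫ t : Circle1, conj (u t) * v t ∂haarAddCircle := by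
    rw [MeasureTheory.L2.inner_def]
    apply MeasureTheory.integral_congr_ae
    filter_upwards [ContinuousMap.coeFn_toLp (p := 2) (μ := haarAddCircle) (𝕜 := ℂ) u,
      ContinuousMap.coeFn_toLp (p := 2) (μ := haarAddCircle) (𝕜 := ℂ) v] with t h4 h5
    rw [h4, h5, RCLike.inner_apply, mul_comm]
  simp_rw [h1, h2, h3] at h
  exact h

lemma summable_coeff_sq (u : C(Circle1, ℂ)) :
    Summable fun n : ℤ => ‖fourierCoeff (⇑u) n‖ ^ 2 := by
  have h := (hasSum_coeff_mul u u).summable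
  have h2 := h.mapL (Complex.reCLM)
  refine h2.congr fun n => ?_
  simp [Complex.conj_mul', ← Complex.ofReal_pow]

lemma summable_coeff_mul_norm (u v : C(Circle1, ℂ)) :
    Summable fun n : ℤ => ‖fourierCoeff (⇑u) n‖ * ‖fourierCoeff (⇑v) n‖ := by
  refine Summable.of_nonneg_of_le (fun n => by positivity) (fun n => ?_)
    (((summable_coeff_sq u).add (summable_coeff_sq v)).div_const 2)
  have := sq_nonneg (‖fourierCoeff (⇑u) n‖ - ‖fourierCoeff (⇑v) n‖)
  nlinarith

lemma integrable_conj_mul (u v : C(Circle1, ℂ)) :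
    Integrable (fun t : Circle1 => conj (u t) * v t) haarAddCircle := by
  set U := ContinuousMap.toLp (E := ℂ) 2 haarAddCircle ℂ u with hU
  set V := ContinuousMap.toLp (E := ℂ) 2 haarAddCircle ℂ v with hV
  have h := MeasureTheory.L2.integrable_inner (𝕜 := ℂ) U V
  apply h.congr
  filter_upwards [ContinuousMap.coeFn_toLp (p := 2) (μ := haarAddCircle) (𝕜 := ℂ) u,
    ContinuousMap.coeFn_toLp (p := 2) (μ := haarAddCircle) (𝕜 := ℂ) v] with t h4 h5
  rw [RCLike.inner_apply, h4, h5, mul_comm]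

lemma summable_entry (f g : Circle1 → ℂ) (hf : ContDiff ℝ (⊤ : ℕ∞) fun x : ℝ => f x)
    (hg : ContDiff ℝ (⊤ : ℕ∞) fun x : ℝ => g x) :
    Summable fun n : ℤ => ‖fourierCoeff g n‖ * ‖fourierCoeff (Df f) n‖ :=
  summable_coeff_mul_norm ⟨g, continuous_lift_to_circle g hg.continuous⟩
    ⟨Df f, continuous_Df f hf⟩

lemma scalar_est (f g : Circle1 → ℂ) (hf : ContDiff ℝ (⊤ : ℕ∞) fun x : ℝ => f x)
    (hg : ContDiff ℝ (⊤ : ℕ∞) fun x : ℝ => g x) :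
    |∫ s in (0:ℝ)..1, (deriv (fun x : ℝ => f x) s * conj (g (s : Circle1))).re| ≤
      ∑' n : ℤ, ‖fourierCoeff g n‖ * ‖fourierCoeff (Df f) n‖ := by
  have hgc : Continuous g := continuous_lift_to_circle g hg.continuous
  have hDfc : Continuous (Df f) := continuous_Df f hf
  let G : C(Circle1, ℂ) := ⟨g, hgc⟩
  let D : C(Circle1, ℂ) := ⟨Df f, hDfc⟩
  have hsum : HasSum (fun n : ℤ => conj (fourierCoeff g n) * fourierCoeff (Df f) n)
      (∫ t : Circle1, conj (g t) * Df f t ∂haarAddCircle) := hasSum_coeff_mul G D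
  have hA : (∫ s in (0:ℝ)..1, (deriv (fun x : ℝ => f x) s * conj (g (s : Circle1))).re)
      = ∫ y : Circle1, (conj (g y) * Df f y).re ∂haarAddCircle := by
    have h0 : (∫ s in (0:ℝ)..1, (deriv (fun x : ℝ => f x) s * conj (g (s : Circle1))).re)
        = ∫ s in (0:ℝ)..(0+1 : ℝ),
            (fun y : Circle1 => (conj (g y) * Df f y).re) (s : Circle1) := by
      rw [zero_add]
      apply intervalIntegral.integral_congr
      intro s _
      simp only [Df_coe]
      rw [mul_comm]
    rw [h0]
    rw [AddCircle.intervalIntegral_preimage (T := 1) 0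
      (fun y : Circle1 => (conj (g y) * Df f y).re), volume_eq_smul_haarAddCircle]
    simp
  have hB : (∫ y : Circle1, (conj (g y) * Df f y).re ∂haarAddCircle)
      = (∫ y : Circle1, conj (g y) * Df f y ∂haarAddCircle).re := by
    have h := integral_re (μ := haarAddCircle)
      (f := fun y : Circle1 => conj (g y) * Df f y) (integrable_conj_mul G D)
    simpa only [RCLike.re_eq_complex_re] using h
  have hnorm : ∀ n : ℤ, ‖conj (fourierCoeff g n) * fourierCoeff (Df f) n‖
      = ‖fourierCoeff g n‖ * ‖fourierCoeff (Df f) n‖ := fun n => by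
    rw [norm_mul, RCLike.norm_conj]
  have hsummable : Summable fun n : ℤ =>
      ‖conj (fourierCoeff g n) * fourierCoeff (Df f) n‖ := by
    simp_rw [hnorm]
    exact summable_coeff_mul_norm G D
  rw [hA, hB, ← hsum.tsum_eq]
  calc |(∑' n : ℤ, conj (fourierCoeff g n) * fourierCoeff (Df f) n).re|
      ≤ ‖∑' n : ℤ, conj (fourierCoeff g n) * fourierCoeff (Df f) n‖ :=
        Complex.abs_re_le_norm _
    _ ≤ ∑' n : ℤ, ‖conj (fourierCoeff g n) * fourierCoeff (Df f) n‖ :=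
        norm_tsum_le_tsum_norm hsummable
    _ = ∑' n : ℤ, ‖fourierCoeff g n‖ * ‖fourierCoeff (Df f) n‖ := tsum_congr hnorm

lemma matCoeffNormSq_nonneg {d : ℕ} (f : Circle1 → Mat d) (n : ℤ) :
    0 ≤ matCoeffNormSq f n := by
  apply Finset.sum_nonneg
  intro i _
  apply Finset.sum_nonneg
  intro j _
  positivity

lemma per_n {d : ℕ} (γ X : Circle1 → Mat d) (hγ : MatSmoothLoop γ) (hX : MatSmoothLoop X)
    (n : ℤ) :
    (∑ i : Fin d, ∑ j : Fin d, ‖fourierCoeff (fun y : Circle1 => X y i j) n‖ *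
        ‖fourierCoeff (Df (fun y : Circle1 => γ y i j)) n‖)
      ≤ 2 * π * (Real.sqrt ((1 + |(n : ℝ)|) * matCoeffNormSq γ n)
          * Real.sqrt ((1 + |(n : ℝ)|) * matCoeffNormSq X n)) := by
  have step1 : (∑ i : Fin d, ∑ j : Fin d, ‖fourierCoeff (fun y : Circle1 => X y i j) n‖ *
        ‖fourierCoeff (Df (fun y : Circle1 => γ y i j)) n‖)
      = 2 * π * |(n : ℝ)| * ∑ i : Fin d, ∑ j : Fin d,
          ‖fourierCoeff (fun y : Circle1 => γ y i j) n‖ *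
          ‖fourierCoeff (fun y : Circle1 => X y i j) n‖ := by
    rw [Finset.mul_sum]
    apply Finset.sum_congr rfl
    intro i _
    rw [Finset.mul_sum]
    apply Finset.sum_congr rfl
    intro j _
    rw [norm_coeff_Df _ (hγ i j) n]
    ring
  have step2 : (∑ i : Fin d, ∑ j : Fin d,
        ‖fourierCoeff (fun y : Circle1 => γ y i j) n‖ *
        ‖fourierCoeff (fun y : Circle1 => X y i j) n‖)
      ≤ Real.sqrt (matCoeffNormSq γ n) * Real.sqrt (matCoeffNormSq X n) := by
    have h := Real.sum_mul_le_sqrt_mul_sqrt (Finset.univ : Finset (Fin d × Fin d))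
      (fun p => ‖fourierCoeff (fun y : Circle1 => γ y p.1 p.2) n‖)
      (fun p => ‖fourierCoeff (fun y : Circle1 => X y p.1 p.2) n‖)
    rw [Fintype.sum_prod_type] at h
    convert h using 2
    · unfold matCoeffNormSq
      rw [Fintype.sum_prod_type]
    · unfold matCoeffNormSq
      rw [Fintype.sum_prod_type]
  have hn1 : (0:ℝ) ≤ 1 + |(n : ℝ)| := by positivity
  rw [Real.sqrt_mul hn1, Real.sqrt_mul hn1, step1]
  have hs := Real.sq_sqrt hn1
  have hsabs : |(n : ℝ)| ≤ 1 + |(n : ℝ)| := by linarith [abs_nonneg (n:ℝ)]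
  have hγs := Real.sqrt_nonneg (matCoeffNormSq γ n)
  have hXs := Real.sqrt_nonneg (matCoeffNormSq X n)
  have hssq := Real.sqrt_nonneg (1 + |(n : ℝ)|)
  calc 2 * π * |(n : ℝ)| * ∑ i : Fin d, ∑ j : Fin d,
        ‖fourierCoeff (fun y : Circle1 => γ y i j) n‖ *
        ‖fourierCoeff (fun y : Circle1 => X y i j) n‖
      ≤ 2 * π * |(n : ℝ)| *
        (Real.sqrt (matCoeffNormSq γ n) * Real.sqrt (matCoeffNormSq X n)) := by
        apply mul_le_mul_of_nonneg_left step2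
        positivity
    _ ≤ 2 * π * (Real.sqrt (1 + |(n : ℝ)|) * Real.sqrt (matCoeffNormSq γ n) *
          (Real.sqrt (1 + |(n : ℝ)|) * Real.sqrt (matCoeffNormSq X n))) := by
        have key : |(n : ℝ)| * (Real.sqrt (matCoeffNormSq γ n) * Real.sqrt (matCoeffNormSq X n))
            ≤ Real.sqrt (1 + |(n : ℝ)|) * Real.sqrt (matCoeffNormSq γ n) *
              (Real.sqrt (1 + |(n : ℝ)|) * Real.sqrt (matCoeffNormSq X n)) := by
          have hrw : Real.sqrt (1 + |(n : ℝ)|) * Real.sqrt (matCoeffNormSq γ n) *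
              (Real.sqrt (1 + |(n : ℝ)|) * Real.sqrt (matCoeffNormSq X n))
              = Real.sqrt (1 + |(n : ℝ)|) ^ 2 *
                (Real.sqrt (matCoeffNormSq γ n) * Real.sqrt (matCoeffNormSq X n)) := by ring
          rw [hrw, hs]
          exact mul_le_mul_of_nonneg_right hsabs (mul_nonneg hγs hXs)
        nlinarith [Real.pi_pos]

lemma ennreal_CS (A B : ℤ → ℝ≥0∞) :
    (∑' n : ℤ, A n * B n) ≤
      (∑' n : ℤ, A n ^ (2:ℝ)) ^ (1/2 : ℝ) * (∑' n : ℤ, B n ^ (2:ℝ)) ^ (1/2 : ℝ) := by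
  have hpq : Real.HolderConjugate 2 2 := Real.HolderConjugate.two_two
  have h := ENNReal.lintegral_mul_le_Lp_mul_Lq (Measure.count : Measure ℤ) hpq
    (Measurable.of_discrete (f := A)).aemeasurable (Measurable.of_discrete (f := B)).aemeasurable
  simpa [MeasureTheory.lintegral_count] using h

end

end CanonAux

open CanonAux in
/-- for smooth matrix-valued loops `γ, X`,
`|∫₀¹ ⟨γ'(s), X(s)⟩ ds| ≤ 2π ‖γ‖_{1/2} ‖X‖_{1/2}`; hence the canonical `1`-form
`θ_γ(X) = ∫ ⟨γ', X⟩` extends to the `H^{1/2}` setting by the duality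
`H^{-1/2} × H^{1/2} → ℝ`. -/
theorem canonical_one_form_estimate
    (d : ℕ) (γ X : Circle1 → Mat d) (hγ : MatSmoothLoop γ) (hX : MatSmoothLoop X) :
    ENNReal.ofReal |∫ s in (0:ℝ)..1, matRealInner (matDeriv γ s) (X (s : Circle1))| ≤
      ENNReal.ofReal (2 * Real.pi) *
        (matSobolevNormSq (1/2) γ) ^ (1/2 : ℝ) * (matSobolevNormSq (1/2) X) ^ (1/2 : ℝ) := by
  classical
  set t : Fin d → Fin d → ℤ → ℝ := fun i j n =>
    ‖fourierCoeff (fun y : Circle1 => X y i j) n‖ *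
    ‖fourierCoeff (Df (fun y : Circle1 => γ y i j)) n‖ with ht
  have htnonneg : ∀ i j n, 0 ≤ t i j n := fun i j n => by
    rw [ht]; positivity
  have hcont : ∀ i j : Fin d, Continuous fun s : ℝ =>
      (deriv (fun x : ℝ => γ (x : Circle1) i j) s *
        (starRingEnd ℂ) (X ((s : ℝ) : Circle1) i j)).re := fun i j =>
    Complex.continuous_re.comp
      (((hγ i j).continuous_deriv (by simp)).mul
        (Complex.continuous_conj.comp (hX i j).continuous))
  have hent : ∀ i j : Fin d,
      |∫ s in (0:ℝ)..1, (deriv (fun x : ℝ => γ (x : Circle1) i j) s *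
          (starRingEnd ℂ) (X ((s : ℝ) : Circle1) i j)).re| ≤ ∑' n : ℤ, t i j n :=
    fun i j => scalar_est (fun y => γ y i j) (fun y => X y i j) (hγ i j) (hX i j)
  have hsummable : ∀ i j : Fin d, Summable (t i j) := fun i j =>
    summable_entry _ _ (hγ i j) (hX i j)
  have hsplit : (∫ s in (0:ℝ)..1, matRealInner (matDeriv γ s) (X (s : Circle1)))
      = ∑ i : Fin d, ∑ j : Fin d, ∫ s in (0:ℝ)..1,
          (deriv (fun x : ℝ => γ (x : Circle1) i j) s *
            (starRingEnd ℂ) (X ((s : ℝ) : Circle1) i j)).re := by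
    have hfun : (fun s : ℝ => matRealInner (matDeriv γ s) (X (s : Circle1)))
        = fun s : ℝ => ∑ i : Fin d, ∑ j : Fin d,
            (deriv (fun x : ℝ => γ (x : Circle1) i j) s *
              (starRingEnd ℂ) (X ((s : ℝ) : Circle1) i j)).re := rfl
    rw [hfun, intervalIntegral.integral_finset_sum]
    · apply Finset.sum_congr rfl
      intro i _
      rw [intervalIntegral.integral_finset_sum]
      intro j _
      exact ((hcont i j).intervalIntegrable _ _)
    · intro i _
      exact ((continuous_finset_sum _ fun j _ => hcont i j).intervalIntegrable _ _)
  -- the sum over n of the per-frequency contributions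
  set S : ℤ → ℝ := fun n => ∑ i : Fin d, ∑ j : Fin d, t i j n with hS
  have hSnonneg : ∀ n, 0 ≤ S n := fun n =>
    Finset.sum_nonneg fun i _ => Finset.sum_nonneg fun j _ => htnonneg i j n
  have hsumj : ∀ i : Fin d, Summable fun n : ℤ => ∑ j : Fin d, t i j n :=
    fun i => summable_sum fun j _ => hsummable i j
  have hSsummable : Summable S := summable_sum fun i _ => hsumj i
  have hreal : |∫ s in (0:ℝ)..1, matRealInner (matDeriv γ s) (X (s : Circle1))| ≤
      ∑' n : ℤ, S n := by
    have h1 : |∫ s in (0:ℝ)..1, matRealInner (matDeriv γ s) (X (s : Circle1))| ≤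
        ∑ i : Fin d, ∑ j : Fin d, ∑' n : ℤ, t i j n := by
      rw [hsplit]
      refine (Finset.abs_sum_le_sum_abs _ _).trans ?_
      refine Finset.sum_le_sum fun i _ => ?_
      refine (Finset.abs_sum_le_sum_abs _ _).trans ?_
      exact Finset.sum_le_sum fun j _ => hent i j
    have h2 : (∑ i : Fin d, ∑ j : Fin d, ∑' n : ℤ, t i j n) = ∑' n : ℤ, S n := by
      have hinner : ∀ i : Fin d, (∑ j : Fin d, ∑' n : ℤ, t i j n)
          = ∑' n : ℤ, ∑ j : Fin d, t i j n :=
        fun i => (Summable.tsum_finsetSum fun j _ => hsummable i j).symm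
      calc (∑ i : Fin d, ∑ j : Fin d, ∑' n : ℤ, t i j n)
          = ∑ i : Fin d, ∑' n : ℤ, ∑ j : Fin d, t i j n :=
            Finset.sum_congr rfl fun i _ => hinner i
        _ = ∑' n : ℤ, S n := (Summable.tsum_finsetSum fun i _ => hsumj i).symm
    exact h1.trans_eq h2
  -- pass to `ℝ≥0∞`
  set a : ℤ → ℝ := fun n => Real.sqrt ((1 + |(n : ℝ)|) * matCoeffNormSq γ n) with ha
  set b : ℤ → ℝ := fun n => Real.sqrt ((1 + |(n : ℝ)|) * matCoeffNormSq X n) with hb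
  have hpern : ∀ n : ℤ, S n ≤ 2 * Real.pi * (a n * b n) := fun n => per_n γ X hγ hX n
  set A : ℤ → ℝ≥0∞ := fun n => ENNReal.ofReal (a n) with hA
  set B : ℤ → ℝ≥0∞ := fun n => ENNReal.ofReal (b n) with hB
  have step1 : ENNReal.ofReal
        |∫ s in (0:ℝ)..1, matRealInner (matDeriv γ s) (X (s : Circle1))|
      ≤ ∑' n : ℤ, ENNReal.ofReal (S n) := by
    refine (ENNReal.ofReal_le_ofReal hreal).trans_eq ?_
    exact ENNReal.ofReal_tsum_of_nonneg hSnonneg hSsummable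
  have step2 : (∑' n : ℤ, ENNReal.ofReal (S n))
      ≤ ENNReal.ofReal (2 * Real.pi) * ∑' n : ℤ, A n * B n := by
    rw [← ENNReal.tsum_mul_left]
    refine ENNReal.tsum_le_tsum fun n => ?_
    refine (ENNReal.ofReal_le_ofReal (hpern n)).trans_eq ?_
    rw [ENNReal.ofReal_mul (by positivity), ENNReal.ofReal_mul (Real.sqrt_nonneg _)]
  have step3 : (∑' n : ℤ, A n * B n) ≤
      (∑' n : ℤ, A n ^ (2:ℝ)) ^ (1/2 : ℝ) * (∑' n : ℤ, B n ^ (2:ℝ)) ^ (1/2 : ℝ) :=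
    ennreal_CS A B
  have hsob : ∀ (Y : Circle1 → Mat d) (n : ℤ),
      ENNReal.ofReal (Real.sqrt ((1 + |(n : ℝ)|) * matCoeffNormSq Y n)) ^ (2:ℝ)
        = ENNReal.ofReal ((1 + |(n : ℝ)|) ^ (2 * (1/2 : ℝ)) * matCoeffNormSq Y n) := by
    intro Y n
    have hc : (0:ℝ) ≤ (1 + |(n : ℝ)|) * matCoeffNormSq Y n := by
      have := matCoeffNormSq_nonneg Y n
      positivity
    rw [show (2 * (1/2 : ℝ)) = 1 by norm_num, Real.rpow_one,
      ENNReal.ofReal_rpow_of_nonneg (Real.sqrt_nonneg _) (by norm_num : (0:ℝ) ≤ 2)]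
    congr 1
    rw [show ((2:ℝ)) = ((2:ℕ):ℝ) by norm_num, Real.rpow_natCast, Real.sq_sqrt hc]
  have hAsq : (∑' n : ℤ, A n ^ (2:ℝ)) = matSobolevNormSq (1/2) γ := by
    simp only [hA, ha, matSobolevNormSq]
    exact tsum_congr fun n => hsob γ n
  have hBsq : (∑' n : ℤ, B n ^ (2:ℝ)) = matSobolevNormSq (1/2) X := by
    simp only [hB, hb, matSobolevNormSq]
    exact tsum_congr fun n => hsob X n
  calc ENNReal.ofReal |∫ s in (0:ℝ)..1, matRealInner (matDeriv γ s) (X (s : Circle1))|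
      ≤ ∑' n : ℤ, ENNReal.ofReal (S n) := step1
    _ ≤ ENNReal.ofReal (2 * Real.pi) * ∑' n : ℤ, A n * B n := step2
    _ ≤ ENNReal.ofReal (2 * Real.pi) *
        ((∑' n : ℤ, A n ^ (2:ℝ)) ^ (1/2 : ℝ) * (∑' n : ℤ, B n ^ (2:ℝ)) ^ (1/2 : ℝ)) :=
        mul_le_mul_right step3 _
    _ = ENNReal.ofReal (2 * Real.pi) *
        (matSobolevNormSq (1/2) γ) ^ (1/2 : ℝ) * (matSobolevNormSq (1/2) X) ^ (1/2 : ℝ) := by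
        rw [hAsq, hBsq, mul_assoc]
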